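/- arXiv:1711.08409 — 4 statements merged into one kernel-verified Lean document; each statement's English description precedes it below -/
import Mathlib

section
/- If A is a good bounded pseudo-hoop, then for all x, y ∈ A, (x⊙y)^{-∼} ≥ x^{-∼} ⊙ y^{-∼}, where x^- = x→0 and x^∼ = x⇝0. -/
universe u v

class PseudoHoop (A : Type u) extends One A, Mul A where
  rimp : A → A → A
  limp : A → A → A
  mul_one' : ∀ x : A, x * 1 = x
  one_mul' : ∀ x : A, 1 * x = x
  rimp_self : ∀ x : A, rimp x x = 1
  limp_self : ∀ x : A, limp x x = 1
  mul_rimp : ∀ x y z : A, rimp (x * y) z = rimp x (rimp y z)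
  mul_limp : ∀ x y z : A, limp (x * y) z = limp y (limp x z)
  div₁ : ∀ x y : A, (rimp x y) * x = (rimp y x) * y
  div₂ : ∀ x y : A, (rimp x y) * x = x * (limp x y)
  div₃ : ∀ x y : A, x * (limp x y) = y * (limp y x)

namespace PseudoHoop

/-- The order on a pseudo-hoop: `x ≤ y` iff `x → y = 1`. -/
def ple {A : Type u} [PseudoHoop A] (x y : A) : Prop := rimp x y = 1

/-- The meet `x ∧ y = (x → y) ⊙ x`. -/
def meet {A : Type u} [PseudoHoop A] (x y : A) : A := (rimp x y) * x

/-- `x ∨₁ y = (x → y) ⇝ y`. -/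
def join₁ {A : Type u} [PseudoHoop A] (x y : A) : A := limp (rimp x y) y

/-- `x ∨₂ y = (x ⇝ y) → y`. -/
def join₂ {A : Type u} [PseudoHoop A] (x y : A) : A := rimp (limp x y) y

/-- Iterated implication: `x →⁰ y = y`, `x →ⁿ⁺¹ y = x → (x →ⁿ y)`. -/
def rimpPow {A : Type u} [PseudoHoop A] (x : A) : ℕ → A → A
  | 0, y => y
  | n + 1, y => rimp x (rimpPow x n y)

/-- A filter of a pseudo-hoop. -/
structure IsFilter {A : Type u} [PseudoHoop A] (F : Set A) : Prop where
  nonempty : F.Nonempty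
  mul_mem : ∀ {x y : A}, x ∈ F → y ∈ F → x * y ∈ F
  upward : ∀ {x y : A}, x ∈ F → ple x y → y ∈ F

/-- A normal filter: `x → y ∈ F` iff `x ⇝ y ∈ F`. -/
def IsNormalFilter {A : Type u} [PseudoHoop A] (F : Set A) : Prop :=
  IsFilter F ∧ ∀ x y : A, rimp x y ∈ F ↔ limp x y ∈ F

def IsProper {A : Type u} [PseudoHoop A] (F : Set A) : Prop := F ≠ Set.univ

/-- A pseudo-hoop is simple if `{1}` is its unique proper filter. -/
def IsSimple (A : Type u) [PseudoHoop A] : Prop :=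
  ∀ F : Set A, IsFilter F → IsProper F → F = {1}

/-- A pseudo-hoop is Wajsberg if `x ∨₁ y = y ∨₁ x` and `x ∨₂ y = y ∨₂ x`. -/
def IsWajsberg (A : Type u) [PseudoHoop A] : Prop :=
  ∀ x y : A, join₁ x y = join₁ y x ∧ join₂ x y = join₂ y x

/-- A fantastic filter. -/
def IsFantasticFilter {A : Type u} [PseudoHoop A] (F : Set A) : Prop :=
  IsFilter F ∧ ∀ x y : A,
    (rimp y x ∈ F → rimp (join₁ x y) x ∈ F) ∧
    (limp y x ∈ F → limp (join₂ x y) x ∈ F)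

def IS₂ {A : Type u} [PseudoHoop A] (μ : A → A) : Prop :=
  ∀ x y : A, μ (x * y) = μ x * μ (limp x (x * y)) ∧
    μ (x * y) = μ (rimp y (x * y)) * μ y

def IS₃ {A : Type u} [PseudoHoop A] (μ : A → A) : Prop :=
  ∀ x y : A, μ (μ x * μ y) = μ x * μ y

def IS₄ {A : Type u} [PseudoHoop A] (μ : A → A) : Prop :=
  ∀ x y : A, μ (rimp (μ x) (μ y)) = rimp (μ x) (μ y) ∧
    μ (limp (μ x) (μ y)) = limp (μ x) (μ y)

/-- Type I state operator. -/
def IsStateI {A : Type u} [PseudoHoop A] (μ : A → A) : Prop :=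
  (∀ x y : A, μ (rimp x y) = rimp (μ (join₁ x y)) (μ y) ∧
      μ (limp x y) = limp (μ (join₂ x y)) (μ y)) ∧ IS₂ μ ∧ IS₃ μ ∧ IS₄ μ

/-- Type II state operator. -/
def IsStateII {A : Type u} [PseudoHoop A] (μ : A → A) : Prop :=
  (∀ x y : A, μ (rimp x y) = rimp (μ (join₁ y x)) (μ y) ∧
      μ (limp x y) = limp (μ (join₂ y x)) (μ y)) ∧ IS₂ μ ∧ IS₃ μ ∧ IS₄ μ

/-- Type III state operator. -/
def IsStateIII {A : Type u} [PseudoHoop A] (μ : A → A) : Prop :=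
  (∀ x y : A, μ (rimp x y) = rimp (μ x) (μ (meet x y)) ∧
      μ (limp x y) = limp (μ x) (μ (meet x y))) ∧ IS₂ μ ∧ IS₃ μ ∧ IS₄ μ

end PseudoHoop

open PseudoHoop

/-- A bounded pseudo-hoop: a pseudo-hoop with a least element `0`. -/
class BoundedPseudoHoop (A : Type u) extends PseudoHoop A, Zero A where
  zero_le : ∀ x : A, rimp 0 x = 1

namespace BoundedPseudoHoop

/-- `x⁻ = x → 0`. -/
def negr {A : Type u} [BoundedPseudoHoop A] (x : A) : A := rimp x 0

/-- `x∼ = x ⇝ 0`. -/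
def negl {A : Type u} [BoundedPseudoHoop A] (x : A) : A := limp x 0

/-- A bounded pseudo-hoop is good if `x⁻∼ = x∼⁻` for all `x`. -/
def IsGood (A : Type u) [BoundedPseudoHoop A] : Prop :=
  ∀ x : A, negl (negr x) = negr (negl x)

/-- A bounded pseudo-hoop is involutive if `x⁻∼ = x∼⁻ = x` for all `x`. -/
def IsInvolutive (A : Type u) [BoundedPseudoHoop A] : Prop :=
  ∀ x : A, negl (negr x) = x ∧ negr (negl x) = x

/-- The set of dense elements. -/
def Den (A : Type u) [BoundedPseudoHoop A] : Set A :=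
  {x : A | negl (negr x) = 1}

/-- An involutive filter: `x⁻∼ → x ∈ F` and `x∼⁻ ⇝ x ∈ F` for all `x`. -/
def IsInvolutiveFilter {A : Type u} [BoundedPseudoHoop A] (F : Set A) : Prop :=
  IsFilter F ∧ ∀ x : A, rimp (negl (negr x)) x ∈ F ∧ limp (negr (negl x)) x ∈ F

end BoundedPseudoHoop

open BoundedPseudoHoop

/-!
By the Galois connection `a ≤ b∼ ↔ b ≤ a⁻`, the claim says `(x ⊙ y)⁻ ≤ (x⁻∼ ⊙ y⁻∼)⁻`, which by
residuation and `y⁻∼⁻ = y⁻` is `x → y⁻ ≤ x⁻∼ → y⁻`. This last inequality is where goodness is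
needed.
-/

namespace BoundedPseudoHoop

variable {A : Type u} [BoundedPseudoHoop A]

theorem negr_mul_self (x : A) : negr x * x = 0 := by
  have h := div₁ x (0 : A)
  rwa [zero_le, one_mul'] at h

theorem mul_negl_self (x : A) : x * negl x = 0 :=
  (div₂ x 0).symm.trans (negr_mul_self x)

theorem negr_mul (x y : A) : negr (x * y) = rimp x (negr y) :=
  mul_rimp x y 0

theorem rimp_one (x : A) : rimp x 1 = 1 := by
  have h : rimp x (rimp (negl x) (negl x)) = 1 := by rw [← mul_rimp, mul_negl_self, zero_le]
  rwa [rimp_self] at h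

theorem one_rimp (x : A) : rimp 1 x = x := by
  simpa only [rimp_one, one_mul', mul_one'] using div₁ (1 : A) x

theorem one_limp (x : A) : limp 1 x = x := by
  simpa only [one_rimp, one_mul', mul_one'] using (div₂ (1 : A) x).symm

theorem limp_one (x : A) : limp x 1 = 1 := by
  have hx : x * limp x 1 = x := by rw [div₃, one_limp, one_mul']
  calc limp x 1 = limp (x * limp x 1) 1 := by rw [hx]
    _ = 1 := by rw [mul_limp, limp_self]

theorem ple_iff_limp_eq_one {x y : A} : ple x y ↔ limp x y = 1 := by
  constructor
  · intro h
    have hx : y * limp y x = x := by rw [← div₃, ← div₂, h, one_mul']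
    rw [← hx, mul_limp, limp_self, limp_one]
  · intro h
    have hx : rimp y x * y = x := by rw [← div₁, div₂, h, mul_one']
    rw [ple, ← hx, mul_rimp, rimp_self, rimp_one]

theorem ple_refl (x : A) : ple x x :=
  rimp_self x

theorem ple_rimp_iff_mul_ple {a b c : A} : ple a (rimp b c) ↔ ple (a * b) c := by
  rw [ple, ple, mul_rimp]

theorem ple_limp_iff_mul_ple {a b c : A} : ple a (limp b c) ↔ ple (b * a) c := by
  rw [ple_iff_limp_eq_one, ple_iff_limp_eq_one, mul_limp]

theorem ple_trans {a b c : A} (hab : ple a b) (hbc : ple b c) : ple a c := by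
  have ha : rimp b a * b = a := by rw [← div₁, hab, one_mul']
  rw [ple, ← ha, mul_rimp, hbc, rimp_one]

theorem ple_antisymm {a b : A} (hab : ple a b) (hba : ple b a) : a = b := by
  have h := div₁ a b
  rwa [hab, hba, one_mul', one_mul'] at h

theorem mul_ple_mul_left (c : A) {a b : A} (h : ple a b) : ple (c * a) (c * b) :=
  ple_limp_iff_mul_ple.mp (ple_trans h (ple_limp_iff_mul_ple.mpr (ple_refl _)))

theorem ple_negl_iff_ple_negr {a b : A} : ple a (negl b) ↔ ple b (negr a) := by
  rw [negl, negr, ple_limp_iff_mul_ple, ple_rimp_iff_mul_ple]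

theorem ple_negl_negr (x : A) : ple x (negl (negr x)) :=
  ple_negl_iff_ple_negr.mpr (ple_refl _)

theorem ple_negr_negl (x : A) : ple x (negr (negl x)) :=
  ple_negl_iff_ple_negr.mp (ple_refl _)

theorem negr_antitone {a b : A} (h : ple a b) : ple (negr b) (negr a) := by
  apply ple_rimp_iff_mul_ple.mpr
  simpa only [negr_mul_self] using mul_ple_mul_left (negr b) h

theorem negr_negl_negr (x : A) : negr (negl (negr x)) = negr x :=
  ple_antisymm (negr_antitone (ple_negl_negr x)) (ple_negr_negl (negr x))

theorem IsGood.negl_negr_negr (hg : IsGood A) (x : A) : negl (negr (negr x)) = negr x := by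
  rw [hg, negr_negl_negr]

-- With `a = x → y⁻`: `a ⊙ x ≤ y⁻` gives `y⁻⁻ ≤ (a ⊙ x)⁻ = (a ⊙ x⁻∼)⁻`, i.e. `a ⊙ x⁻∼ ≤ y⁻⁻∼`,
-- and goodness identifies `y⁻⁻∼` with `y⁻∼⁻ = y⁻`.
theorem IsGood.rimp_negr_ple_negl_negr_rimp_negr (hg : IsGood A) (x y : A) :
    ple (rimp x (negr y)) (rimp (negl (negr x)) (negr y)) := by
  set a := rimp x (negr y)
  have hax : ple (a * x) (negr y) := ple_rimp_iff_mul_ple.mp (ple_refl a)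
  have hnegr : ple (negr (negr y)) (negr (a * negl (negr x))) := by
    rw [negr_mul, negr_negl_negr, ← negr_mul]
    exact negr_antitone hax
  rw [ple_rimp_iff_mul_ple, ← hg.negl_negr_negr y]
  exact ple_negl_iff_ple_negr.mpr hnegr

end BoundedPseudoHoop

theorem stmt2 {A : Type u} [BoundedPseudoHoop A] (hg : IsGood A) (x y : A) :
    ple (negl (negr x) * negl (negr y)) (negl (negr (x * y))) := by
  rw [ple_negl_iff_ple_negr, negr_mul, negr_mul, negr_negl_negr]
  exact hg.rimp_negr_ple_negl_negr_rimp_negr x y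
end

section
/- A pseudo-hoop A is simple (i.e., {1} is its unique proper filter) if and only if for all x, y ∈ A with x ≠ 1, there exists n ∈ ℕ such that x →ⁿ y = 1, where x →⁰ y = y and x →ⁿ y = x → (x →ⁿ⁻¹ y). -/
universe u v

open PseudoHoop

open BoundedPseudoHoop

/-! The filter generated by `x` is `<x> = {y | xⁿ ≤ y for some n}`, and `xⁿ ≤ y` is the
equation `x →ⁿ y = 1` because `(x ⊙ z) → y = x → (z → y)`. If `A` is simple and `x ≠ 1`,
then `<x>` is not `{1}`, hence it is all of `A`. Conversely, a filter containing some `x ≠ 1`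
contains every power `xⁿ`, and the hypothesis puts every `y` above one of them. -/

namespace PseudoHoop

variable {A : Type u} [PseudoHoop A]

theorem ple_antisymm {x y : A} (hxy : ple x y) (hyx : ple y x) : x = y := by
  unfold ple at hxy hyx
  simpa only [hxy, hyx, one_mul'] using div₁ x y

theorem one_rimp (x : A) : rimp 1 x = x := by
  refine ple_antisymm ?_ ?_ <;> unfold ple
  · simpa only [mul_one', rimp_self] using mul_rimp (rimp 1 x) 1 x
  · simpa only [mul_one', rimp_self] using (mul_rimp x 1 x).symm

theorem rimp_one (x : A) : rimp x 1 = 1 := by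
  have hx : rimp x 1 * x = x := by simpa only [one_rimp, mul_one'] using div₁ x 1
  simpa only [hx, rimp_self] using mul_rimp (rimp x 1) x 1

theorem limp_one (x : A) : limp x 1 = 1 := by
  have hx : x * limp x 1 = x := by simpa only [rimp_one, one_mul'] using (div₂ x 1).symm
  simpa only [hx, limp_self] using mul_limp x (limp x 1) 1

theorem rimp_mul_eq_of_ple {x y : A} (h : ple y x) : rimp x y * x = y := by
  unfold ple at h
  simpa only [h, one_mul'] using (div₁ y x).symm

theorem ple_trans {x y z : A} (hxy : ple x y) (hyz : ple y z) : ple x z := by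
  have h := mul_rimp (rimp y x) y z
  rwa [rimp_mul_eq_of_ple hxy, hyz, rimp_one] at h

instance : PartialOrder A where
  le := ple
  le_refl := rimp_self
  le_trans _ _ _ := ple_trans
  le_antisymm _ _ := ple_antisymm

theorem le_iff_rimp_eq_one {x y : A} : x ≤ y ↔ rimp x y = 1 := Iff.rfl

theorem le_one (x : A) : x ≤ 1 := rimp_one x

theorem le_of_limp_eq_one {x y : A} (h : limp x y = 1) : x ≤ y := by
  have hx : rimp y x * y = x := by rw [div₂, div₃, h, mul_one']
  show rimp x y = 1
  rw [← hx, mul_rimp, rimp_self, rimp_one]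

theorem mul_le_left (x y : A) : x * y ≤ x :=
  le_of_limp_eq_one <| by rw [mul_limp, limp_self, limp_one]

theorem le_rimp_mul (x y : A) : x ≤ rimp y (x * y) := by
  rw [le_iff_rimp_eq_one, ← mul_rimp, rimp_self]

theorem rimp_le_rimp_of_le {x y : A} (h : x ≤ y) (z : A) : rimp y z ≤ rimp x z := by
  have hx : rimp x z = rimp (rimp y x) (rimp y z) := by
    conv_lhs => rw [← rimp_mul_eq_of_ple h]
    exact mul_rimp _ _ _
  rw [le_iff_rimp_eq_one, hx, ← mul_rimp]
  exact mul_le_left _ _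

theorem mul_le_mul' {a b c d : A} (hab : a ≤ b) (hcd : c ≤ d) : a * c ≤ b * d := by
  rw [le_iff_rimp_eq_one, mul_rimp]
  exact hab.trans ((le_rimp_mul b d).trans (rimp_le_rimp_of_le hcd _))

theorem eq_of_rimp_eq {x y : A} (h : ∀ z, rimp x z = rimp y z) : x = y :=
  le_antisymm (by rw [le_iff_rimp_eq_one, h, rimp_self])
    (by rw [le_iff_rimp_eq_one, ← h, rimp_self])

theorem mul_assoc' (x y z : A) : x * y * z = x * (y * z) :=
  eq_of_rimp_eq fun w => by simp only [mul_rimp]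

instance : Monoid A where
  mul_assoc := mul_assoc'
  one_mul := one_mul'
  mul_one := mul_one'

theorem rimp_pow (x y : A) (n : ℕ) : rimp (x ^ n) y = rimpPow x n y := by
  induction n with
  | zero => rw [pow_zero, one_rimp, rimpPow]
  | succ n ih => rw [pow_succ', mul_rimp, ih, rimpPow]

def principalFilter (x : A) : Set A := {y | ∃ n : ℕ, x ^ n ≤ y}

theorem mem_principalFilter {x y : A} :
    y ∈ principalFilter x ↔ ∃ n : ℕ, rimpPow x n y = 1 := by
  simp only [principalFilter, Set.mem_ofPred_eq, le_iff_rimp_eq_one, rimp_pow]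

theorem self_mem_principalFilter (x : A) : x ∈ principalFilter x := ⟨1, (pow_one x).le⟩

theorem isFilter_principalFilter (x : A) : IsFilter (principalFilter x) where
  nonempty := ⟨x, self_mem_principalFilter x⟩
  mul_mem := fun ⟨m, hm⟩ ⟨n, hn⟩ =>
    ⟨m + n, (pow_add x m n).trans_le (mul_le_mul' hm hn)⟩
  upward := fun ⟨n, hn⟩ hxy => ⟨n, hn.trans hxy⟩

namespace IsFilter

variable {F : Set A}

theorem one_mem (hF : IsFilter F) : (1 : A) ∈ F :=
  hF.nonempty.elim fun x hx => hF.upward hx (le_one x)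

theorem pow_mem (hF : IsFilter F) {x : A} (hx : x ∈ F) (n : ℕ) : x ^ n ∈ F := by
  induction n with
  | zero => simpa only [pow_zero] using hF.one_mem
  | succ n ih => simpa only [pow_succ'] using hF.mul_mem hx ih

theorem principalFilter_subset (hF : IsFilter F) {x : A} (hx : x ∈ F) : principalFilter x ⊆ F :=
  fun _ ⟨n, hn⟩ => hF.upward (hF.pow_mem hx n) hn

end IsFilter

end PseudoHoop

theorem stmt3 {A : Type u} [PseudoHoop A] :
    IsSimple A ↔ ∀ x y : A, x ≠ 1 → ∃ n : ℕ, rimpPow x n y = 1 := by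
  constructor
  · intro hS x y hx
    have hgen : principalFilter x = Set.univ := by
      by_contra hproper
      apply hx
      simpa only [hS _ (isFilter_principalFilter x) hproper, Set.mem_singleton_iff] using
        self_mem_principalFilter x
    exact mem_principalFilter.mp (hgen ▸ Set.mem_univ y)
  · intro h F hF hproper
    refine Set.Subset.antisymm (fun x hx => by_contra fun hx1 => hproper ?_) ?_
    · exact Set.eq_univ_of_forall fun y =>
        hF.principalFilter_subset hx (mem_principalFilter.mpr (h x y hx1))
    · exact Set.singleton_subset_iff.mpr hF.one_mem
end

section
/- In a Wajsberg pseudo-hoop A, for all x, y, z ∈ A: (x ∨ y) → z = (x → z) ∧ (y → z) and (x ∨ y) ⇝ z = (x ⇝ z) ∧ (y ⇝ z), where x ∨ y = (x→y)⇝y and x ∧ y = (x→y)⊙x. -/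
universe u v

open PseudoHoop

open BoundedPseudoHoop

/-! Both sides of each identity have the same lower bounds. By residuation,
`c ≤ (x ∨ y) → z` iff `x ∨ y ≤ c ⇝ z`. In a Wajsberg pseudo-hoop `x ∨ y` is the least upper
bound of `x` and `y`: commutativity of `∨` makes it an upper bound of `x` as well as of `y`, and
for `x, y ≤ u` it gives `x ∨ y ≤ u ∨ y = y ∨ u = u`, using that `→` and `⇝` are antitone in
their first argument. Hence `c ≤ (x ∨ y) → z` iff `c ≤ x → z` and `c ≤ y → z`, i.e. iff
`c ≤ (x → z) ∧ (y → z)`; exchanging the roles of `→` and `⇝` gives the second identity. -/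

namespace PseudoHoop

variable {A : Type u} [PseudoHoop A]

theorem eq_of_rimp_eq_one {x y : A} (hxy : rimp x y = 1) (hyx : rimp y x = 1) : x = y := by
  simpa only [hxy, hyx, one_mul'] using div₁ x y

theorem one_rimp_eq_rimp_one_mul (x : A) : rimp 1 x = rimp x 1 * x := by
  simpa only [mul_one'] using (div₁ x 1).symm

theorem rimp_rimp_one_one (x : A) : rimp (rimp x 1) 1 = 1 := by
  have h : rimp x 1 = rimp (rimp x 1) 1 * rimp x 1 := by
    rw [← one_rimp_eq_rimp_one_mul, ← mul_rimp, one_mul']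
  rw [h, mul_rimp, rimp_self]

theorem one_limp (x : A) : limp 1 x = x := by
  simpa only [mul_one', one_mul', one_rimp] using (div₂ 1 x).symm

theorem eq_mul_limp_of_rimp_eq_one {x y : A} (h : rimp x y = 1) : x = y * limp y x := by
  simpa only [h, one_mul'] using (div₂ x y).trans (div₃ x y)

theorem rimp_eq_one_iff_limp_eq_one {x y : A} : rimp x y = 1 ↔ limp x y = 1 := by
  constructor
  · intro h
    rw [eq_mul_limp_of_rimp_eq_one h, mul_limp, limp_self, limp_one]
  · intro h
    have hx : x = rimp y x * y := by simpa only [h, mul_one'] using (div₂ x y).symm.trans (div₁ x y)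
    rw [hx, mul_rimp, rimp_self, rimp_one]

theorem rimp_mul_self_left (x y : A) : rimp (x * y) x = 1 :=
  rimp_eq_one_iff_limp_eq_one.2 (by rw [mul_limp, limp_self, limp_one])

theorem rimp_eq_one_trans {x y z : A} (hxy : rimp x y = 1) (hyz : rimp y z = 1) :
    rimp x z = 1 := by
  have hx : x = z * limp z y * limp y x := by
    rw [← eq_mul_limp_of_rimp_eq_one hyz]
    exact eq_mul_limp_of_rimp_eq_one hxy
  have key := rimp_mul_self_left z (limp z y * limp y x)
  rw [mul_rimp, mul_rimp] at key
  rw [hx, mul_rimp, mul_rimp]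
  exact key

instance inst_s5 : PartialOrder A where
  le := ple
  le_refl := rimp_self
  le_trans _ _ _ := rimp_eq_one_trans
  le_antisymm _ _ := eq_of_rimp_eq_one

theorem le_iff_limp_eq_one {x y : A} : x ≤ y ↔ limp x y = 1 := rimp_eq_one_iff_limp_eq_one

theorem le_rimp_iff_mul_le {x y z : A} : x ≤ rimp y z ↔ x * y ≤ z := by
  rw [le_iff_rimp_eq_one, le_iff_rimp_eq_one, mul_rimp]

theorem le_limp_iff_mul_le {x y z : A} : y ≤ limp x z ↔ x * y ≤ z := by
  rw [le_iff_limp_eq_one, le_iff_limp_eq_one, mul_limp]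

theorem gc_mul_rimp (y : A) : GaloisConnection (· * y) (rimp y) :=
  fun _ _ => le_rimp_iff_mul_le.symm

theorem gc_mul_limp (x : A) : GaloisConnection (x * ·) (limp x) :=
  fun _ _ => le_limp_iff_mul_le.symm

theorem mul_le_right (x y : A) : x * y ≤ y := by
  rw [le_iff_rimp_eq_one, mul_rimp, rimp_self, rimp_one]

theorem limp_le_limp_of_le {x y : A} (h : x ≤ y) (z : A) : limp y z ≤ limp x z :=
  le_limp_iff_mul_le.2 <| ((gc_mul_rimp _).monotone_l h).trans ((gc_mul_limp y).l_u_le z)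

theorem le_meet_iff {x y z : A} : z ≤ meet x y ↔ z ≤ x ∧ z ≤ y := by
  refine ⟨fun h => ⟨h.trans (mul_le_right _ _), h.trans (le_rimp_iff_mul_le.1 le_rfl)⟩, ?_⟩
  rintro ⟨hx, hy⟩
  rw [eq_mul_limp_of_rimp_eq_one hx, meet, div₂]
  exact (gc_mul_limp x).monotone_l ((gc_mul_limp x).monotone_u hy)

theorem le_join₁_right (x y : A) : y ≤ join₁ x y :=
  le_limp_iff_mul_le.2 (mul_le_right _ _)

theorem join₁_le_iff (h : IsWajsberg A) {x y z : A} : join₁ x y ≤ z ↔ x ≤ z ∧ y ≤ z := by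
  refine ⟨fun hz => ⟨?_, (le_join₁_right x y).trans hz⟩, ?_⟩
  · rw [(h x y).1] at hz
    exact (le_join₁_right y x).trans hz
  · rintro ⟨hx, hy⟩
    have hz : join₁ z y = z := by rw [(h z y).1, join₁, hy, one_limp]
    rw [← hz]
    exact limp_le_limp_of_le (rimp_le_rimp_of_le hx y) y

theorem rimp_join₁_eq_meet (h : IsWajsberg A) (x y z : A) :
    rimp (join₁ x y) z = meet (rimp x z) (rimp y z) :=
  eq_of_forall_le_iff fun c => by
    simp only [le_meet_iff, le_rimp_iff_mul_le, ← le_limp_iff_mul_le, join₁_le_iff h]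

theorem limp_join₁_eq_meet (h : IsWajsberg A) (x y z : A) :
    limp (join₁ x y) z = meet (limp x z) (limp y z) :=
  eq_of_forall_le_iff fun c => by
    simp only [le_meet_iff, le_limp_iff_mul_le, ← le_rimp_iff_mul_le, join₁_le_iff h]

end PseudoHoop

theorem stmt5 {A : Type u} [PseudoHoop A] (h : IsWajsberg A) (x y z : A) :
    rimp (join₁ x y) z = meet (rimp x z) (rimp y z) ∧
    limp (join₁ x y) z = meet (limp x z) (limp y z) :=
  ⟨rimp_join₁_eq_meet h x y z, limp_join₁_eq_meet h x y z⟩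
end

section
/- If s is a Bosbach state on a bounded pseudo-hoop A, then Ker(s) = {x ∈ A : s(x) = 1} is an involutive filter of A. -/
universe u v

open PseudoHoop

open BoundedPseudoHoop

/-!
The kernel of `s` contains `1` and is closed under modus ponens: if `s x = s (x → y) = 1`, the
Bosbach identity gives `s y + s (y → x) = 2`, forcing `s y = 1`. Such a set is a filter.
For involutivity, `x ≤ x⁻∼` turns the Bosbach identity into `s (x⁻∼ → x) = 1 + s x - s x⁻∼`,
and `s x⁻∼ = s x` because `s x + s x⁻ = 1 = s x⁻ + s x⁻∼`; dually for `x∼⁻ ⇝ x`.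
-/

namespace PseudoHoop

variable {A : Type u} [PseudoHoop A]

theorem rimp_eq_one_of_limp_eq_one {x y : A} (h : limp x y = 1) : rimp x y = 1 := by
  have hx : rimp x y * x = x := by rw [div₂, h, mul_one']
  calc rimp x y = rimp (rimp x y * x) y := by rw [hx]
    _ = 1 := by rw [mul_rimp, rimp_self]

theorem limp_eq_one_of_rimp_eq_one {x y : A} (h : rimp x y = 1) : limp x y = 1 := by
  have hx : x * limp x y = x := by rw [← div₂, h, one_mul']
  calc limp x y = limp (x * limp x y) y := by rw [hx]
    _ = 1 := by rw [mul_limp, limp_self]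

theorem isFilter_of_one_mem_of_rimp_mem {F : Set A} (one_mem : 1 ∈ F)
    (mp : ∀ {x y : A}, x ∈ F → rimp x y ∈ F → y ∈ F) : IsFilter F where
  nonempty := ⟨1, one_mem⟩
  mul_mem {x y} hx hy := by
    have hxy : rimp x (rimp y (x * y)) = 1 := by rw [← mul_rimp, rimp_self]
    exact mp hy (mp hx (hxy ▸ one_mem))
  upward {x y} hx hle := mp hx (by rw [show rimp x y = 1 from hle]; exact one_mem)

end PseudoHoop

namespace BoundedPseudoHoop

variable {A : Type u} [BoundedPseudoHoop A]

theorem limp_zero_left (x : A) : limp 0 x = 1 :=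
  limp_eq_one_of_rimp_eq_one (zero_le x)

theorem rimp_negl_negr (x : A) : rimp x (negl (negr x)) = 1 := by
  apply rimp_eq_one_of_limp_eq_one
  rw [negl, ← mul_limp, negr_mul_self, limp_self]

theorem limp_negr_negl (x : A) : limp x (negr (negl x)) = 1 := by
  apply limp_eq_one_of_rimp_eq_one
  rw [negr, ← mul_rimp, mul_negl_self, rimp_self]

structure IsBosbachState (s : A → ℝ) : Prop where
  mem_Icc : ∀ x : A, s x ∈ Set.Icc (0 : ℝ) 1
  map_zero : s 0 = 0
  map_one : s 1 = 1
  add_rimp : ∀ x y : A, s x + s (rimp x y) = s y + s (rimp y x)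
  add_limp : ∀ x y : A, s x + s (limp x y) = s y + s (limp y x)

namespace IsBosbachState

variable {s : A → ℝ}

theorem add_negr (hs : IsBosbachState s) (x : A) : s x + s (negr x) = 1 := by
  simpa [negr, zero_le, hs.map_zero, hs.map_one] using hs.add_rimp x 0

theorem add_negl (hs : IsBosbachState s) (x : A) : s x + s (negl x) = 1 := by
  simpa [negl, limp_zero_left, hs.map_zero, hs.map_one] using hs.add_limp x 0

theorem map_negl_negr (hs : IsBosbachState s) (x : A) : s (negl (negr x)) = s x := by
  linarith [hs.add_negr x, hs.add_negl (negr x)]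

theorem map_negr_negl (hs : IsBosbachState s) (x : A) : s (negr (negl x)) = s x := by
  linarith [hs.add_negl x, hs.add_negr (negl x)]

theorem map_rimp_of_rimp_eq_one (hs : IsBosbachState s) {x y : A} (h : rimp x y = 1) :
    s (rimp y x) = 1 + s x - s y := by
  linarith [hs.add_rimp x y, h ▸ hs.map_one]

theorem map_limp_of_limp_eq_one (hs : IsBosbachState s) {x y : A} (h : limp x y = 1) :
    s (limp y x) = 1 + s x - s y := by
  linarith [hs.add_limp x y, h ▸ hs.map_one]

theorem map_eq_one_of_map_rimp_eq_one (hs : IsBosbachState s) {x y : A} (hx : s x = 1)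
    (hxy : s (rimp x y) = 1) : s y = 1 := by
  have hy := (hs.mem_Icc y).2
  have hyx := (hs.mem_Icc (rimp y x)).2
  linarith [hs.add_rimp x y]

theorem isInvolutiveFilter_setOf_eq_one (hs : IsBosbachState s) :
    IsInvolutiveFilter {x : A | s x = 1} := by
  refine ⟨isFilter_of_one_mem_of_rimp_mem hs.map_one hs.map_eq_one_of_map_rimp_eq_one,
    fun x => ⟨?_, ?_⟩⟩
  · show s (rimp (negl (negr x)) x) = 1
    rw [hs.map_rimp_of_rimp_eq_one (rimp_negl_negr x), hs.map_negl_negr, add_sub_cancel_right]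
  · show s (limp (negr (negl x)) x) = 1
    rw [hs.map_limp_of_limp_eq_one (limp_negr_negl x), hs.map_negr_negl, add_sub_cancel_right]

end IsBosbachState

end BoundedPseudoHoop

theorem stmt17 {A : Type u} [BoundedPseudoHoop A] (s : A → ℝ)
    (hmem : ∀ x : A, s x ∈ Set.Icc (0 : ℝ) 1)
    (h0 : s 0 = 0) (h1 : s 1 = 1)
    (h2 : ∀ x y : A, s x + s (rimp x y) = s y + s (rimp y x))
    (h3 : ∀ x y : A, s x + s (limp x y) = s y + s (limp y x)) :
    IsInvolutiveFilter {x : A | s x = 1} :=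
  (IsBosbachState.mk hmem h0 h1 h2 h3).isInvolutiveFilter_setOf_eq_one
end
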